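/- arXiv:2110.08057 — 5 statements merged into one kernel-verified Lean document; each statement's English description precedes it below -/
import Mathlib

section
/- Let A be a real symmetric d×d matrix and U a real d×d matrix with UᵀU ≼ I. Then Tr(exp(Uᵀ A U)) ≤ Tr(exp(A)) + d. -/
open Matrix
set_option maxHeartbeats 1000000

private lemma dot_mulVec_same {d : ℕ} {W : Matrix (Fin d) (Fin d) ℝ} (hW : Wᵀ * W = 1)
    (a b : Fin d → ℝ) : (W *ᵥ a) ⬝ᵥ (W *ᵥ b) = a ⬝ᵥ b := by
  calc (W *ᵥ a) ⬝ᵥ (W *ᵥ b) = (a ᵥ* Wᵀ) ⬝ᵥ (W *ᵥ b) := by rw [vecMul_transpose]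
    _ = a ⬝ᵥ (Wᵀ *ᵥ (W *ᵥ b)) := (dotProduct_mulVec _ _ _).symm
    _ = a ⬝ᵥ ((Wᵀ * W) *ᵥ b) := by rw [mulVec_mulVec]
    _ = a ⬝ᵥ b := by rw [hW, one_mulVec]

private lemma dot_diag {d : ℕ} (f x : Fin d → ℝ) :
    x ⬝ᵥ (diagonal f *ᵥ x) = ∑ i, f i * x i ^ 2 := by
  simp only [dotProduct, mulVec_diagonal]
  exact Finset.sum_congr rfl fun i _ => by ring

private lemma counting {d : ℕ} {A U : Matrix (Fin d) (Fin d) ℝ}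
    (hAh : A.IsHermitian) (hBh : (Uᵀ * A * U).IsHermitian)
    (hU : (1 - Uᵀ * U).PosSemidef) {t : ℝ} (ht : 0 ≤ t) :
    (Finset.univ.filter fun i => t < hBh.eigenvalues i).card ≤
      (Finset.univ.filter fun i => t < hAh.eigenvalues i).card := by
  by_contra hcard
  push_neg at hcard
  set lam := hAh.eigenvalues with hlam
  set mu := hBh.eigenvalues with hmu
  set SA := Finset.univ.filter fun i => t < lam i with hSAdef
  set SB := Finset.univ.filter fun i => t < mu i with hSBdef
  set V : Matrix (Fin d) (Fin d) ℝ := (hAh.eigenvectorUnitary : Matrix (Fin d) (Fin d) ℝ) with hVdef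
  set W : Matrix (Fin d) (Fin d) ℝ := (hBh.eigenvectorUnitary : Matrix (Fin d) (Fin d) ℝ) with hWdef
  have hV1 : Vᵀ * V = 1 := by
    have := mem_unitaryGroup_iff'.mp (hAh.eigenvectorUnitary).2
    rwa [star_eq_conjTranspose, conjTranspose_eq_transpose_of_trivial] at this
  have hV2 : V * Vᵀ = 1 := by
    have := mem_unitaryGroup_iff.mp (hAh.eigenvectorUnitary).2
    rwa [star_eq_conjTranspose, conjTranspose_eq_transpose_of_trivial] at this
  have hW1 : Wᵀ * W = 1 := by
    have := mem_unitaryGroup_iff'.mp (hBh.eigenvectorUnitary).2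
    rwa [star_eq_conjTranspose, conjTranspose_eq_transpose_of_trivial] at this
  have hAspec : A = V * diagonal lam * Vᵀ := by
    have := hAh.spectral_theorem
    rw [Unitary.conjStarAlgAut_apply, star_eq_conjTranspose, conjTranspose_eq_transpose_of_trivial] at this
    simpa using this
  have hBspec : Uᵀ * A * U = W * diagonal mu * Wᵀ := by
    have := hBh.spectral_theorem
    rw [Unitary.conjStarAlgAut_apply, star_eq_conjTranspose, conjTranspose_eq_transpose_of_trivial] at this
    simpa using this
  set M : Matrix (Fin d) (Fin d) ℝ := Vᵀ * U * W with hMdef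
  set N : Matrix {j // j ∈ SA} {i // i ∈ SB} ℝ :=
    Matrix.of (fun j i => M j.val i.val) with hNdef
  set L := N.mulVecLin with hLdef
  have hninj : ¬ Function.Injective L := by
    intro hinj
    have h1 := LinearMap.finrank_le_finrank_of_injective hinj
    simp only [Module.finrank_pi, Fintype.card_coe] at h1
    omega
  obtain ⟨a, b, hab, hne⟩ := Function.not_injective_iff.mp hninj
  set c := a - b with hcdef
  have hc0 : c ≠ 0 := sub_ne_zero.mpr hne
  have hLc : L c = 0 := by rw [hcdef, map_sub, hab, sub_self]
  set cc : Fin d → ℝ := fun i => if h : i ∈ SB then c ⟨i, h⟩ else 0 with hccdef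
  -- the image of cc under M vanishes on SA
  have hMc : ∀ j, j ∈ SA → (M *ᵥ cc) j = 0 := by
    intro j hj
    have key : ∀ i : {i // i ∈ SB}, M j i.val * cc i.val = N ⟨j, hj⟩ i * c i := fun i => by
      simp only [hccdef, dif_pos i.2, hNdef, of_apply, Subtype.coe_eta]
    calc (M *ᵥ cc) j = ∑ i : Fin d, M j i * cc i := rfl
      _ = ∑ i ∈ SB, M j i * cc i := by
          refine (Finset.sum_subset SB.subset_univ ?_).symm
          intro i _ hi
          simp [hccdef, dif_neg hi]
      _ = ∑ i ∈ SB.attach, M j i.val * cc i.val := (Finset.sum_attach SB _).symm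
      _ = ∑ i ∈ SB.attach, N ⟨j, hj⟩ i * c i := Finset.sum_congr rfl fun i _ => key i
      _ = ∑ i : {i // i ∈ SB}, N ⟨j, hj⟩ i * c i := by rw [Finset.univ_eq_attach]
      _ = (L c) ⟨j, hj⟩ := rfl
      _ = 0 := by rw [hLc]; rfl
  set v : Fin d → ℝ := W *ᵥ cc with hvdef
  set w : Fin d → ℝ := U *ᵥ v with hwdef
  set u : Fin d → ℝ := Vᵀ *ᵥ w with hudef
  have hu : u = M *ᵥ cc := by
    rw [hudef, hwdef, hvdef, hMdef, ← mulVec_mulVec, ← mulVec_mulVec]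
  have hwu : w = V *ᵥ u := by
    rw [hudef, mulVec_mulVec, hV2, one_mulVec]
  -- quadratic form identities
  have e1 : (W * diagonal mu * Wᵀ) *ᵥ (W *ᵥ cc) = W *ᵥ (diagonal mu *ᵥ cc) := by
    rw [mulVec_mulVec, mul_assoc (W * diagonal mu), hW1, mul_one, ← mulVec_mulVec]
  have q1 : v ⬝ᵥ ((Uᵀ * A * U) *ᵥ v) = ∑ i, mu i * cc i ^ 2 := by
    rw [hBspec, hvdef, e1, dot_mulVec_same hW1, dot_diag]
  have e2 : (V * diagonal lam * Vᵀ) *ᵥ (V *ᵥ u) = V *ᵥ (diagonal lam *ᵥ u) := by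
    rw [mulVec_mulVec, mul_assoc (V * diagonal lam), hV1, mul_one, ← mulVec_mulVec]
  have q2 : w ⬝ᵥ (A *ᵥ w) = ∑ j, lam j * u j ^ 2 := by
    conv_lhs => rw [hAspec, hwu]
    rw [e2, dot_mulVec_same hV1, dot_diag]
  have q3 : v ⬝ᵥ ((Uᵀ * A * U) *ᵥ v) = w ⬝ᵥ (A *ᵥ w) := by
    conv_lhs => rw [← mulVec_mulVec, ← mulVec_mulVec]
    rw [dotProduct_mulVec, vecMul_transpose]
  have q4 : w ⬝ᵥ w ≤ v ⬝ᵥ v := by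
    have h := hU.dotProduct_mulVec_nonneg v
    rw [star_trivial, sub_mulVec, one_mulVec, dotProduct_sub] at h
    have h2 : v ⬝ᵥ ((Uᵀ * U) *ᵥ v) = w ⬝ᵥ w := by
      rw [← mulVec_mulVec, dotProduct_mulVec, vecMul_transpose]
    rw [h2] at h
    linarith
  have q5 : cc ⬝ᵥ cc = v ⬝ᵥ v := (dot_mulVec_same hW1 cc cc).symm
  -- strict lower bound
  have hex : ∃ i0 : Fin d, cc i0 ≠ 0 := by
    obtain ⟨i0, hi0⟩ := Function.ne_iff.mp hc0
    exact ⟨i0.val, by simpa [hccdef, dif_pos i0.2, Subtype.coe_eta] using hi0⟩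
  have lower : t * (cc ⬝ᵥ cc) < ∑ i, mu i * cc i ^ 2 := by
    obtain ⟨i0, hi0⟩ := hex
    have hi0SB : i0 ∈ SB := by
      by_contra hn
      exact hi0 (by simp [hccdef, dif_neg hn])
    have hmui0 : t < mu i0 := (Finset.mem_filter.mp hi0SB).2
    have : t * (cc ⬝ᵥ cc) = ∑ i, t * (cc i * cc i) := by
      rw [dotProduct, Finset.mul_sum]
    rw [this]
    apply Finset.sum_lt_sum
    · intro i _
      rcases eq_or_ne (cc i) 0 with h | h
      · simp [h]
      · have hiSB : i ∈ SB := by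
          by_contra hn
          exact h (by simp [hccdef, dif_neg hn])
        have : t ≤ mu i := le_of_lt (Finset.mem_filter.mp hiSB).2
        nlinarith [sq_nonneg (cc i)]
    · refine ⟨i0, Finset.mem_univ i0, ?_⟩
      rw [pow_two]
      exact mul_lt_mul_of_pos_right hmui0 (mul_self_pos.mpr hi0)
  -- upper bound
  have upper : ∑ j, lam j * u j ^ 2 ≤ t * (u ⬝ᵥ u) := by
    have : t * (u ⬝ᵥ u) = ∑ j, t * (u j * u j) := by
      rw [dotProduct, Finset.mul_sum]
    rw [this]
    apply Finset.sum_le_sum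
    intro j _
    by_cases hj : j ∈ SA
    · have huj : u j = 0 := by rw [hu]; exact hMc j hj
      simp [huj]
    · have hlamj : ¬ t < lam j := fun h => hj (Finset.mem_filter.mpr ⟨Finset.mem_univ j, h⟩)
      push_neg at hlamj
      nlinarith [sq_nonneg (u j)]
  have huw : u ⬝ᵥ u = w ⬝ᵥ w := by rw [hwu]; exact (dot_mulVec_same hV1 u u).symm
  have : t * (v ⬝ᵥ v) < t * (v ⬝ᵥ v) := by
    calc t * (v ⬝ᵥ v) = t * (cc ⬝ᵥ cc) := by rw [q5]
      _ < ∑ i, mu i * cc i ^ 2 := lower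
      _ = v ⬝ᵥ ((Uᵀ * A * U) *ᵥ v) := q1.symm
      _ = w ⬝ᵥ (A *ᵥ w) := q3
      _ = ∑ j, lam j * u j ^ 2 := q2
      _ ≤ t * (u ⬝ᵥ u) := upper
      _ = t * (w ⬝ᵥ w) := by rw [huw]
      _ ≤ t * (v ⬝ᵥ v) := mul_le_mul_of_nonneg_left q4 ht
  exact lt_irrefl _ this

private lemma trace_exp_eq {d : ℕ} (M : Matrix (Fin d) (Fin d) ℝ) (hM : M.IsHermitian) :
    (NormedSpace.exp M).trace = ∑ i, Real.exp (hM.eigenvalues i) := by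
  set V : Matrix (Fin d) (Fin d) ℝ := (hM.eigenvectorUnitary : Matrix (Fin d) (Fin d) ℝ) with hVdef
  have hV1 : star V * V = 1 := mem_unitaryGroup_iff'.mp (hM.eigenvectorUnitary).2
  have hV2 : V * star V = 1 := mem_unitaryGroup_iff.mp (hM.eigenvectorUnitary).2
  have hVinv : V⁻¹ = star V := inv_eq_left_inv hV1
  have hVunit : IsUnit V := (⟨V, star V, hV2, hV1⟩ : Units (Matrix (Fin d) (Fin d) ℝ)).isUnit
  have hspec : M = V * diagonal hM.eigenvalues * V⁻¹ := by
    rw [hVinv]; simpa using hM.spectral_theorem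
  have key : NormedSpace.exp M = V * NormedSpace.exp (diagonal hM.eigenvalues) * V⁻¹ := by
    conv_lhs => rw [hspec]
    exact Matrix.exp_conj V _ hVunit
  rw [key, Matrix.exp_diagonal, Matrix.trace_mul_cycle, hVinv, hV1, one_mul, trace_diagonal]
  simp [Real.exp_eq_exp_ℝ]

/-- If `A` is symmetric and `UᵀU ≼ I`, then `Tr(exp(Uᵀ A U)) ≤ Tr(exp(A)) + d`. -/
theorem trace_exp_conj_le {d : ℕ}
    (A U : Matrix (Fin d) (Fin d) ℝ) (hA : A.IsSymm)
    (hU : (1 - Uᵀ * U).PosSemidef) :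
    (NormedSpace.exp (Uᵀ * A * U)).trace ≤ (NormedSpace.exp A).trace + d := by
  have hAh : A.IsHermitian := by
    show Aᴴ = A
    rw [conjTranspose_eq_transpose_of_trivial]
    exact hA
  have hBh : (Uᵀ * A * U).IsHermitian := by
    show (Uᵀ * A * U)ᴴ = Uᵀ * A * U
    rw [conjTranspose_eq_transpose_of_trivial, transpose_mul, transpose_mul,
      transpose_transpose, hA, mul_assoc]
  set lam := hAh.eigenvalues with hlam
  set mu := hBh.eigenvalues with hmu
  rw [trace_exp_eq A hAh, trace_exp_eq _ hBh]
  -- sort the eigenvalues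
  set σ := Tuple.sort mu with hσ
  set τ := Tuple.sort lam with hτ
  have hmono_mu : Monotone (mu ∘ σ) := Tuple.monotone_sort mu
  have hmono_lam : Monotone (lam ∘ τ) := Tuple.monotone_sort lam
  have hperm : ∀ (π : Equiv.Perm (Fin d)) (f : Fin d → ℝ) (t : ℝ),
      (Finset.univ.filter fun i => t < f (π i)).card =
        (Finset.univ.filter fun i => t < f i).card := by
    intro π f t
    apply Finset.card_bij (fun j _ => π j)
    · intro j hj
      simp only [Finset.mem_filter, Finset.mem_univ, true_and] at hj ⊢
      exact hj
    · intro j₁ _ j₂ _ h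
      exact π.injective h
    · intro k hk
      refine ⟨π.symm k, ?_, by simp⟩
      simp only [Finset.mem_filter, Finset.mem_univ, true_and] at hk ⊢
      simpa using hk
  have pointwise : ∀ i : Fin d, mu (σ i) ≤ max (lam (τ i)) 0 := by
    intro i
    by_contra h
    push_neg at h
    set t := max (lam (τ i)) 0 with htdef
    have ht : 0 ≤ t := le_max_right _ _
    have h1 : Finset.Ici i ⊆ Finset.univ.filter fun j => t < mu (σ j) := by
      intro j hj
      simp only [Finset.mem_Ici] at hj
      simp only [Finset.mem_filter, Finset.mem_univ, true_and]
      exact lt_of_lt_of_le h (hmono_mu hj)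
    have h2 : (Finset.univ.filter fun j => t < lam (τ j)) ⊆ Finset.Ioi i := by
      intro j hj
      simp only [Finset.mem_filter, Finset.mem_univ, true_and] at hj
      simp only [Finset.mem_Ioi]
      by_contra hle
      push_neg at hle
      exact absurd (lt_of_le_of_lt (le_max_left _ _) hj) (not_lt.mpr (hmono_lam hle))
    have hc1 : (Finset.Ici i).card ≤ (Finset.univ.filter fun j => t < mu j).card := by
      rw [← hperm σ mu t]; exact Finset.card_le_card h1
    have hc2 : (Finset.univ.filter fun j => t < lam j).card ≤ (Finset.Ioi i).card := by
      rw [← hperm τ lam t]; exact Finset.card_le_card h2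
    have hcount : (Finset.univ.filter fun j => t < mu j).card ≤
        (Finset.univ.filter fun j => t < lam j).card := counting hAh hBh hU ht
    rw [Fin.card_Ici, Fin.card_Ioi] at *
    have hi : (i : ℕ) < d := i.is_lt
    omega
  calc ∑ i, Real.exp (mu i) = ∑ i, Real.exp (mu (σ i)) := (Equiv.sum_comp σ (fun i => Real.exp (mu i))).symm
    _ ≤ ∑ i, (Real.exp (lam (τ i)) + 1) := by
        apply Finset.sum_le_sum
        intro i _
        have := Real.exp_le_exp.mpr (pointwise i)
        rcases le_total (lam (τ i)) 0 with h | h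
        · rw [max_eq_right h, Real.exp_zero] at this
          have hp := Real.exp_pos (lam (τ i))
          linarith
        · rw [max_eq_left h] at this
          linarith
    _ = (∑ i, Real.exp (lam (τ i))) + d := by
        rw [Finset.sum_add_distrib]
        simp
    _ = (∑ i, Real.exp (lam i)) + d := by rw [Equiv.sum_comp τ (fun i => Real.exp (lam i))]
end

section
/- Let U, V be real symmetric d×d matrices and ε ∈ (0,1) with 0 ≼ U ≼ c·I and 0 ≼ V ≼ c·I, where c = ε/(4(ε²+2ε+2)). If U and V are such that (combined with the spectral bounds) −I ≼ U − (1+ε)V ≼ I, then exp(U − (1+ε)V) ≼ I + (U − (1+ε)V) + 4U² + 4(1+ε)²V², and moreover 4U² ≼ (4ε/(4(ε²+2ε+2)))·U and 4(1+ε)²V² ≼ (4(1+ε)²ε/(4(ε²+2ε+2)))·V, so that exp(U − (1+ε)V) ≼ I + ((4ε + 4(1+ε)²ε)/(4(ε²+2ε+2)) )·(U+V) + (U − (1+ε)V) whose expectation under E[U]=V is at most I. -/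
open Matrix

/-- Scalar inequality: `exp x ≤ 1 + x + x²` for `|x| ≤ 1`. -/
lemma exp_quad_bound_aux {x : ℝ} (hx : |x| ≤ 1) : Real.exp x ≤ 1 + x + x ^ 2 := by
  have h := Real.exp_bound hx (n := 2) (by norm_num)
  have hsum : ∑ m ∈ Finset.range 2, x ^ m / m.factorial = 1 + x := by
    simp [Finset.sum_range_succ]
  rw [hsum] at h
  have h2 := (abs_sub_le_iff.mp h).1
  have h3 : |x| ^ 2 = x ^ 2 := sq_abs x
  rw [h3] at h2
  norm_num at h2
  nlinarith [sq_nonneg x]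

/-- Nonnegative scalar multiple of a PSD matrix is PSD. -/
lemma psd_smul_aux {n : ℕ} {A : Matrix (Fin n) (Fin n) ℝ} (hA : A.PosSemidef) {c : ℝ}
    (hc : 0 ≤ c) : (c • A).PosSemidef := by
  refine ⟨?_, fun x => ?_⟩
  · unfold Matrix.IsHermitian
    rw [conjTranspose_smul, star_trivial, hA.1.eq]
  · exact (hA.smul hc).2 x

/-- Square of a hermitian matrix is PSD. -/
lemma sq_psd_aux {n : ℕ} {A : Matrix (Fin n) (Fin n) ℝ} (hA : A.IsHermitian) :
    (A ^ 2).PosSemidef := by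
  have := Matrix.posSemidef_self_mul_conjTranspose A
  rwa [hA.eq, ← pow_two] at this

/-- If `0 ≼ A ≼ c·I` then `A² ≼ c·A`. -/
lemma psd_smul_sub_sq_aux {n : ℕ} {A : Matrix (Fin n) (Fin n) ℝ} (hA : A.PosSemidef) {c : ℝ}
    (hAc : (c • (1 : Matrix (Fin n) (Fin n) ℝ) - A).PosSemidef) :
    (c • A - A ^ 2).PosSemidef := by
  obtain ⟨S, hSh, hSmul⟩ : ∃ S : Matrix (Fin n) (Fin n) ℝ, Sᴴ = S ∧ S * S = A :=
    open scoped MatrixOrder in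
    ⟨CFC.sqrt A, (CFC.sqrt_nonneg A).posSemidef.1, CFC.sqrt_mul_sqrt_self A hA.nonneg⟩
  subst hSmul
  have key : S * (c • (1 : Matrix (Fin n) (Fin n) ℝ) - S * S) * Sᴴ
      = c • (S * S) - (S * S) ^ 2 := by
    rw [hSh, mul_sub, sub_mul, mul_smul_comm, mul_one, smul_mul_assoc, pow_two]
    congr 1
    simp only [mul_assoc]
  rw [← key]
  exact hAc.mul_mul_conjTranspose_same _

/-- Matrix exponential bound: if `M` is hermitian with `-I ≼ M ≼ I` then
`exp M ≼ I + M + M²`. -/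
lemma exp_psd_bound_aux {n : ℕ} {M : Matrix (Fin n) (Fin n) ℝ} (hM : M.IsHermitian)
    (hlo : (M + 1).PosSemidef) (hhi : (1 - M).PosSemidef) :
    (1 + M + M ^ 2 - NormedSpace.exp M).PosSemidef := by
  classical
  set W : Matrix (Fin n) (Fin n) ℝ := (hM.eigenvectorUnitary : Matrix (Fin n) (Fin n) ℝ) with hW
  have hWW : W * star W = 1 := (Matrix.mem_unitaryGroup_iff).mp hM.eigenvectorUnitary.2
  have hWW' : star W * W = 1 := (Matrix.mem_unitaryGroup_iff').mp hM.eigenvectorUnitary.2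
  have hUnit : IsUnit W := ⟨⟨W, star W, hWW, hWW'⟩, rfl⟩
  have hinv : W⁻¹ = star W := Matrix.inv_eq_right_inv hWW
  set lam : Fin n → ℝ := hM.eigenvalues with hlam
  have hspec : M = W * Matrix.diagonal lam * star W := by
    have := hM.spectral_theorem
    simpa using this
  -- eigenvalue bounds
  have habs : ∀ i, |lam i| ≤ 1 := by
    intro i
    set v : Fin n → ℝ := ⇑(hM.eigenvectorBasis i) with hv
    have hvv : dotProduct (star v) v = 1 := by
      have h1 : ‖hM.eigenvectorBasis i‖ = 1 := hM.eigenvectorBasis.orthonormal.1 i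
      have h2 : (inner ℝ (hM.eigenvectorBasis i) (hM.eigenvectorBasis i) : ℝ) = 1 := by
        rw [real_inner_self_eq_norm_sq, h1]; norm_num
      rw [EuclideanSpace.inner_eq_star_dotProduct] at h2
      exact h2
    have hMv : M *ᵥ v = lam i • v := hM.mulVec_eigenvectorBasis i
    have hlo' := hlo.dotProduct_mulVec_nonneg v
    have hhi' := hhi.dotProduct_mulVec_nonneg v
    rw [add_mulVec, one_mulVec, dotProduct_add, hMv, dotProduct_smul, smul_eq_mul, hvv] at hlo'
    rw [sub_mulVec, one_mulVec, dotProduct_sub, hMv, dotProduct_smul, smul_eq_mul, hvv] at hhi'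
    rw [abs_le]
    constructor <;> nlinarith
  have hexp : NormedSpace.exp M
      = W * Matrix.diagonal (fun i => Real.exp (lam i)) * star W := by
    rw [hspec, ← hinv, Matrix.exp_conj W (Matrix.diagonal lam) hUnit, Matrix.exp_diagonal, Pi.exp_def]
    simp [← Real.exp_eq_exp_ℝ]
  have hM2 : M ^ 2 = W * (Matrix.diagonal lam * Matrix.diagonal lam) * star W := by
    rw [pow_two]
    conv_lhs => rw [hspec]
    simp only [Matrix.mul_assoc]
    rw [show star W * (W * (Matrix.diagonal lam * star W))
        = Matrix.diagonal lam * star W by rw [← Matrix.mul_assoc, hWW', Matrix.one_mul]]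
  have h1eq : (1 : Matrix (Fin n) (Fin n) ℝ) = W * 1 * star W := by
    rw [mul_one, hWW]
  have hdiag_eq : Matrix.diagonal (fun i => 1 + lam i + lam i ^ 2 - Real.exp (lam i))
      = 1 + Matrix.diagonal lam + Matrix.diagonal lam * Matrix.diagonal lam
        - Matrix.diagonal (fun i => Real.exp (lam i)) := by
    ext i j
    by_cases h : i = j <;>
      simp [Matrix.diagonal_apply, Matrix.one_apply, h, pow_two, Matrix.mul_apply,
        Matrix.sub_apply, Matrix.add_apply, Finset.sum_ite_eq]
  have key : 1 + M + M ^ 2 - NormedSpace.exp M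
      = W * Matrix.diagonal (fun i => 1 + lam i + lam i ^ 2 - Real.exp (lam i)) * star W := by
    rw [hexp, hM2, hdiag_eq]
    conv_lhs => rw [hspec, h1eq]
    simp only [Matrix.mul_add, Matrix.add_mul, Matrix.mul_sub, Matrix.sub_mul, Matrix.mul_assoc]
  rw [key]
  have hdiag : (Matrix.diagonal
      (fun i => 1 + lam i + lam i ^ 2 - Real.exp (lam i))).PosSemidef := by
    rw [Matrix.posSemidef_diagonal_iff]
    intro i
    have := exp_quad_bound_aux (habs i)
    linarith
  rw [Matrix.star_eq_conjTranspose]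
  exact hdiag.mul_mul_conjTranspose_same W

/-- The deterministic matrix inequality chain used in the proof of the
dynamic-upper-bound matrix concentration lemma. -/
theorem exp_loewner_bound_chain {d : ℕ} (ε : ℝ) (hε : 0 < ε) (hε1 : ε < 1)
    (U V : Matrix (Fin d) (Fin d) ℝ)
    (hU : U.PosSemidef) (hV : V.PosSemidef)
    (hUc : ((ε / (4 * (ε ^ 2 + 2 * ε + 2))) • (1 : Matrix (Fin d) (Fin d) ℝ) - U).PosSemidef)
    (hVc : ((ε / (4 * (ε ^ 2 + 2 * ε + 2))) • (1 : Matrix (Fin d) (Fin d) ℝ) - V).PosSemidef)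
    (hlo : (U - (1 + ε) • V + 1).PosSemidef)
    (hhi : (1 - (U - (1 + ε) • V)).PosSemidef) :
    (1 + (U - (1 + ε) • V) + (4 : ℝ) • U ^ 2 + (4 * (1 + ε) ^ 2) • V ^ 2
        - NormedSpace.exp (U - (1 + ε) • V)).PosSemidef ∧
    ((4 * ε / (4 * (ε ^ 2 + 2 * ε + 2))) • U - (4 : ℝ) • U ^ 2).PosSemidef ∧
    ((4 * (1 + ε) ^ 2 * ε / (4 * (ε ^ 2 + 2 * ε + 2))) • V
        - (4 * (1 + ε) ^ 2) • V ^ 2).PosSemidef ∧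
    (1 + ((4 * ε + 4 * (1 + ε) ^ 2 * ε) / (4 * (ε ^ 2 + 2 * ε + 2))) • (U + V)
        + (U - (1 + ε) • V)
        - NormedSpace.exp (U - (1 + ε) • V)).PosSemidef := by
  have hMher : (U - (1 + ε) • V).IsHermitian := by
    refine hU.1.sub ?_
    unfold Matrix.IsHermitian
    rw [conjTranspose_smul, star_trivial, hV.1.eq]
  have hexp := exp_psd_bound_aux hMher hlo hhi
  have hsq1 : (U ^ 2).PosSemidef := sq_psd_aux hU.1
  have hsq2 : (V ^ 2).PosSemidef := sq_psd_aux hV.1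
  have hplusher : (U + (1 + ε) • V).IsHermitian := by
    refine hU.1.add ?_
    unfold Matrix.IsHermitian
    rw [conjTranspose_smul, star_trivial, hV.1.eq]
  have hsq3 : ((U + (1 + ε) • V) ^ 2).PosSemidef := sq_psd_aux hplusher
  -- Part 1
  have part1 : (1 + (U - (1 + ε) • V) + (4 : ℝ) • U ^ 2 + (4 * (1 + ε) ^ 2) • V ^ 2
      - NormedSpace.exp (U - (1 + ε) • V)).PosSemidef := by
    have hid : 1 + (U - (1 + ε) • V) + (4 : ℝ) • U ^ 2 + (4 * (1 + ε) ^ 2) • V ^ 2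
        - NormedSpace.exp (U - (1 + ε) • V)
        = (1 + (U - (1 + ε) • V) + (U - (1 + ε) • V) ^ 2
            - NormedSpace.exp (U - (1 + ε) • V))
          + ((U ^ 2 + U ^ 2) + ((1 + ε) ^ 2 • V ^ 2 + (1 + ε) ^ 2 • V ^ 2)
            + (U + (1 + ε) • V) ^ 2) := by
      simp only [pow_two, mul_sub, sub_mul, mul_add, add_mul, smul_mul_assoc,
        mul_smul_comm, smul_smul]
      module
    rw [hid]
    exact (hexp.add ((((hsq1.add hsq1).add
      ((psd_smul_aux hsq2 (by positivity)).add (psd_smul_aux hsq2 (by positivity)))).add hsq3)))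
  -- Part 2
  have base2 := psd_smul_sub_sq_aux hU hUc
  have part2 : ((4 * ε / (4 * (ε ^ 2 + 2 * ε + 2))) • U - (4 : ℝ) • U ^ 2).PosSemidef := by
    have hid : (4 * ε / (4 * (ε ^ 2 + 2 * ε + 2))) • U - (4 : ℝ) • U ^ 2
        = (4 : ℝ) • ((ε / (4 * (ε ^ 2 + 2 * ε + 2))) • U - U ^ 2) := by
      match_scalars <;> ring
    rw [hid]
    exact psd_smul_aux base2 (by norm_num)
  -- Part 3
  have base3 := psd_smul_sub_sq_aux hV hVc
  have part3 : ((4 * (1 + ε) ^ 2 * ε / (4 * (ε ^ 2 + 2 * ε + 2))) • V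
      - (4 * (1 + ε) ^ 2) • V ^ 2).PosSemidef := by
    have hid : (4 * (1 + ε) ^ 2 * ε / (4 * (ε ^ 2 + 2 * ε + 2))) • V
        - (4 * (1 + ε) ^ 2) • V ^ 2
        = (4 * (1 + ε) ^ 2) • ((ε / (4 * (ε ^ 2 + 2 * ε + 2))) • V - V ^ 2) := by
      match_scalars <;> ring
    rw [hid]
    exact psd_smul_aux base3 (by positivity)
  refine ⟨part1, part2, part3, ?_⟩
  -- Part 4
  have hrem : ((4 * (1 + ε) ^ 2 * ε / (4 * (ε ^ 2 + 2 * ε + 2))) • U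
      + (4 * ε / (4 * (ε ^ 2 + 2 * ε + 2))) • V).PosSemidef :=
    (psd_smul_aux hU (by positivity)).add (psd_smul_aux hV (by positivity))
  have hid : 1 + ((4 * ε + 4 * (1 + ε) ^ 2 * ε) / (4 * (ε ^ 2 + 2 * ε + 2))) • (U + V)
        + (U - (1 + ε) • V) - NormedSpace.exp (U - (1 + ε) • V)
      = (1 + (U - (1 + ε) • V) + (4 : ℝ) • U ^ 2 + (4 * (1 + ε) ^ 2) • V ^ 2
          - NormedSpace.exp (U - (1 + ε) • V))
        + ((4 * ε / (4 * (ε ^ 2 + 2 * ε + 2))) • U - (4 : ℝ) • U ^ 2)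
        + ((4 * (1 + ε) ^ 2 * ε / (4 * (ε ^ 2 + 2 * ε + 2))) • V
            - (4 * (1 + ε) ^ 2) • V ^ 2)
        + ((4 * (1 + ε) ^ 2 * ε / (4 * (ε ^ 2 + 2 * ε + 2))) • U
            + (4 * ε / (4 * (ε ^ 2 + 2 * ε + 2))) • V) := by
    have hD : (4 * (ε ^ 2 + 2 * ε + 2)) ≠ 0 := by positivity
    match_scalars <;> field_simp <;> ring
  rw [hid]
  exact ((part1.add part2).add part3).add hrem
end

section
/- (Elliptical Potential Lemma) Let x₁,…,xₙ ∈ ℝ^d with ‖xᵢ‖₂ ≤ 1, let Λ₀ = A be positive definite, and Λᵢ = Λ₀ + Σ_{j≤i} xⱼxⱼᵀ. If xᵢᵀ Λ_{i−1}⁻¹ xᵢ ≤ 1 for all i, then Σ_{i=1}^n xᵢᵀ Λ_{i−1}⁻¹ xᵢ ≤ 2 ln( det(Λₙ) / det(Λ₀) ). -/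
open Matrix

private lemma log_aux {u : ℝ} (h0 : 0 ≤ u) (h1 : u ≤ 1) : u ≤ 2 * Real.log (1 + u) := by
  have hpos : (0:ℝ) < 1 + u := by linarith
  have h := Real.log_le_sub_one_of_pos (x := (1+u)⁻¹) (by positivity)
  rw [Real.log_inv] at h
  have hlog : u / (1 + u) ≤ Real.log (1 + u) := by
    have heq : (1+u)⁻¹ - 1 = -(u/(1+u)) := by field_simp; ring
    rw [heq] at h; linarith
  have h2 : u ≤ 2 * (u / (1 + u)) := by
    rw [mul_div_assoc', le_div_iff₀ hpos]; nlinarith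
  linarith

private lemma vecMulVec_psd {d : ℕ} (x : Fin d → ℝ) : (Matrix.vecMulVec x x).PosSemidef := by
  have := Matrix.posSemidef_self_mul_conjTranspose (Matrix.replicateCol Unit x)
  rwa [Matrix.conjTranspose_replicateCol, star_trivial, ← Matrix.vecMulVec_eq] at this

/-- Elliptical Potential Lemma. -/
theorem elliptical_potential_lemma {d : ℕ} (n : ℕ)
    (x : ℕ → (Fin d → ℝ)) (A : Matrix (Fin d) (Fin d) ℝ) (hA : A.PosDef)
    (Λ : ℕ → Matrix (Fin d) (Fin d) ℝ)
    (hΛ : ∀ k, Λ k = A + ∑ j ∈ Finset.range k, Matrix.vecMulVec (x j) (x j))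
    (hnorm : ∀ i < n, x i ⬝ᵥ x i ≤ 1)
    (hsmall : ∀ i < n, x i ⬝ᵥ ((Λ i)⁻¹ *ᵥ x i) ≤ 1) :
    ∑ i ∈ Finset.range n, x i ⬝ᵥ ((Λ i)⁻¹ *ᵥ x i) ≤
      2 * Real.log ((Λ n).det / A.det) := by
  set u : ℕ → ℝ := fun i => x i ⬝ᵥ ((Λ i)⁻¹ *ᵥ x i) with hu
  have hPD : ∀ k, (Λ k).PosDef := by
    intro k
    rw [hΛ k]
    exact hA.add_posSemidef <| Finset.sum_induction _ _ (fun a b ha hb => ha.add hb)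
      Matrix.PosSemidef.zero (fun i _ => vecMulVec_psd (x i))
  have hu0 : ∀ i, 0 ≤ u i := fun i => by
    have := ((hPD i).inv.posSemidef).dotProduct_mulVec_nonneg (x i); rwa [star_trivial] at this
  -- determinant recursion
  have hstep : ∀ k, (Λ (k+1)).det = (Λ k).det * (1 + u k) := by
    intro k
    have hΛs : Λ (k+1) = Λ k + Matrix.replicateCol Unit (x k) * Matrix.replicateRow Unit (x k) := by
      rw [hΛ, hΛ, Finset.sum_range_succ, ← add_assoc, Matrix.vecMulVec_eq Unit]
    rw [hΛs, Matrix.det_add_replicateCol_mul_replicateRow (isUnit_iff_ne_zero.mpr (hPD k).det_pos.ne')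
      (x k) (x k)]
    congr 1
    rw [Matrix.det_unique]
    simp [Matrix.mul_mul_apply, Matrix.mul_apply, Matrix.replicateRow, Matrix.replicateCol, Matrix.mulVec,
      dotProduct, Finset.mul_sum, mul_comm]
    rw [Finset.sum_comm, hu]
    simp only [dotProduct, Matrix.mulVec]
    exact Finset.sum_congr rfl fun i _ => by
      rw [Finset.mul_sum]; exact Finset.sum_congr rfl fun j _ => by ring
  have hdet : ∀ k, (Λ k).det = A.det * ∏ i ∈ Finset.range k, (1 + u i) := by
    intro k
    induction k with
    | zero => simp [hΛ 0]
    | succ k ih => rw [hstep, ih, Finset.prod_range_succ, mul_assoc]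
  have hpos : ∀ i, (0:ℝ) < 1 + u i := fun i => by linarith [hu0 i]
  have hlogdet : Real.log ((Λ n).det / A.det) = ∑ i ∈ Finset.range n, Real.log (1 + u i) := by
    rw [hdet n, mul_div_cancel_left₀ _ (ne_of_gt hA.det_pos)]
    exact Real.log_prod (fun i _ => (hpos i).ne')
  rw [hlogdet, Finset.mul_sum]
  exact Finset.sum_le_sum fun i hi =>
    log_aux (hu0 i) (hsmall i (Finset.mem_range.mp hi))
end

section
/- Let W be a positive definite d×d matrix, X a finite subset of ℝ^d, π a distribution on X, and K ≥ 1 with max_{x∈X} xᵀW⁻¹x ≤ K · E_{y∼π}[yᵀW⁻¹y]. Suppose max_{x∈X} xᵀW⁻¹x > 1 and K · Pr_{y∼π}[yᵀW⁻¹y > 1] < 1. Then K · E_{y∼π}[min{yᵀW⁻¹y, 1}] ≥ 1. -/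
open Matrix

/-- Second case of the clipped G-optimality lemma: if `max_{x∈X} xᵀW⁻¹x > 1` and
`K · Pr_{y∼π}[yᵀW⁻¹y > 1] < 1`, then `K · E_{y∼π}[min{yᵀW⁻¹y, 1}] ≥ 1`. -/
theorem clipped_design_ge_one {d : ℕ} (W : Matrix (Fin d) (Fin d) ℝ) (hW : W.PosDef)
    (X : Finset (Fin d → ℝ)) (hX : X.Nonempty)
    (π : (Fin d → ℝ) → ℝ) (hπ0 : ∀ y ∈ X, 0 ≤ π y) (hπ1 : ∑ y ∈ X, π y = 1)
    (K : ℝ) (hK : 1 ≤ K)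
    (hdesign : ∀ x ∈ X, x ⬝ᵥ (W⁻¹ *ᵥ x) ≤ K * ∑ y ∈ X, π y * (y ⬝ᵥ (W⁻¹ *ᵥ y)))
    (hbig : ∃ x ∈ X, 1 < x ⬝ᵥ (W⁻¹ *ᵥ x))
    (hPr : K * ∑ y ∈ X.filter (fun y => 1 < y ⬝ᵥ (W⁻¹ *ᵥ y)), π y < 1) :
    1 ≤ K * ∑ y ∈ X, π y * min (y ⬝ᵥ (W⁻¹ *ᵥ y)) 1 := by
  obtain ⟨x₀, hx₀X, hx₀⟩ := hbig
  set q : (Fin d → ℝ) → ℝ := fun y => y ⬝ᵥ (W⁻¹ *ᵥ y) with hqdef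
  set E := ∑ y ∈ X, π y * q y with hE
  set B := K * E with hB
  have hB1 : 1 < B := lt_of_lt_of_le hx₀ (hdesign x₀ hx₀X)
  set P := ∑ y ∈ X.filter (fun y => 1 < q y), π y with hPdef
  have hP0 : 0 ≤ P :=
    Finset.sum_nonneg fun y hy => hπ0 y (Finset.mem_filter.mp hy).1
  have key : ∀ y ∈ X, π y * q y - (if 1 < q y then π y else 0) * (B - 1)
      ≤ π y * min (q y) 1 := by
    intro y hy
    by_cases h : 1 < q y
    · simp only [if_pos h]
      rw [min_eq_right h.le]
      have hqB : q y ≤ B := hdesign y hy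
      nlinarith [hπ0 y hy]
    · simp only [if_neg h]
      rw [min_eq_left (not_lt.mp h)]
      simp
  have hsum : E - P * (B - 1) ≤ ∑ y ∈ X, π y * min (q y) 1 := by
    have h := Finset.sum_le_sum key
    rw [Finset.sum_sub_distrib] at h
    have h2 : ∑ y ∈ X, (if 1 < q y then π y else 0) * (B - 1) = P * (B - 1) := by
      rw [hPdef, Finset.sum_mul, Finset.sum_filter]; exact Finset.sum_congr rfl fun y _ => by split <;> simp
    rw [h2] at h
    exact h
  have hKP : K * P < 1 := hPr
  have hK0 : (0:ℝ) < K := lt_of_lt_of_le one_pos hK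
  calc (1:ℝ) ≤ K * (E - P * (B - 1)) := by nlinarith
    _ ≤ K * ∑ y ∈ X, π y * min (q y) 1 := by
        exact mul_le_mul_of_nonneg_left hsum hK0.le
end

section
/- Let θ, x₁,…,xₙ ∈ ℝ^d with ‖θ‖_∞ ≤ 1, λ > 0, Λ = λI + Σᵢ xᵢxᵢᵀ, and let θ̂ = Λ⁻¹ Σᵢ rᵢ xᵢ where rᵢ = xᵢᵀθ + εᵢ with the εᵢ deterministic. Then for any x ∈ ℝ^d: |xᵀ(θ − θ̂)| ≤ √(λ d · xᵀΛ⁻¹x) + |Σᵢ (xᵀΛ⁻¹xᵢ) εᵢ|. -/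
open Matrix

lemma vecMulVec_mulVec' {d : ℕ} (a b v : Fin d → ℝ) :
    Matrix.vecMulVec a b *ᵥ v = (b ⬝ᵥ v) • a := by
  funext i
  simp only [vecMulVec, mulVec, of_apply, dotProduct, Pi.smul_apply, smul_eq_mul,
    Finset.sum_mul]
  exact Finset.sum_congr rfl fun j _ => by ring

lemma sum_mulVec' {d n : ℕ} (M : Fin n → Matrix (Fin d) (Fin d) ℝ) (v : Fin d → ℝ) :
    (∑ i, M i) *ᵥ v = ∑ i, M i *ᵥ v := by
  funext j
  simp [mulVec, dotProduct, Matrix.sum_apply, Finset.sum_mul]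
  rw [Finset.sum_comm]

lemma dotProduct_sum' {d n : ℕ} (v : Fin d → ℝ) (w : Fin n → Fin d → ℝ) :
    v ⬝ᵥ (∑ i, w i) = ∑ i, v ⬝ᵥ w i := by
  simp [dotProduct, Finset.mul_sum]
  rw [Finset.sum_comm]

lemma sum_dotProduct' {d n : ℕ} (w : Fin n → Fin d → ℝ) (v : Fin d → ℝ) :
    (∑ i, w i) ⬝ᵥ v = ∑ i, w i ⬝ᵥ v := by
  simp [dotProduct, Finset.sum_apply, Finset.sum_mul]
  rw [Finset.sum_comm]

/-- Deterministic decomposition step in the ridge-regression confidence bound. -/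
theorem ridge_regression_decomposition {d n : ℕ}
    (θ : Fin d → ℝ) (hθ : ∀ i, |θ i| ≤ 1)
    (x : Fin n → (Fin d → ℝ)) (ε : Fin n → ℝ) (lam : ℝ) (hlam : 0 < lam)
    (Λ : Matrix (Fin d) (Fin d) ℝ)
    (hΛ : Λ = lam • (1 : Matrix (Fin d) (Fin d) ℝ)
        + ∑ i, Matrix.vecMulVec (x i) (x i))
    (r : Fin n → ℝ) (hr : ∀ i, r i = x i ⬝ᵥ θ + ε i)
    (θhat : Fin d → ℝ) (hθhat : θhat = Λ⁻¹ *ᵥ (∑ i, r i • x i))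
    (y : Fin d → ℝ) :
    |y ⬝ᵥ (θ - θhat)| ≤
      Real.sqrt (lam * d * (y ⬝ᵥ (Λ⁻¹ *ᵥ y)))
        + |∑ i, (y ⬝ᵥ (Λ⁻¹ *ᵥ x i)) * ε i| := by
  -- Λ is positive definite
  have hsum : (∑ i, Matrix.vecMulVec (x i) (x i)).PosSemidef := by
    rw [posSemidef_iff_dotProduct_mulVec]
    constructor
    · unfold Matrix.IsHermitian
      ext i j
      simp [vecMulVec, conjTranspose, Matrix.sum_apply, mul_comm]
    · intro v
      have : ∀ i : Fin n, (star v : Fin d → ℝ) ⬝ᵥ (vecMulVec (x i) (x i) *ᵥ v)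
          = (x i ⬝ᵥ v) * (v ⬝ᵥ x i) := by
        intro i
        rw [vecMulVec_mulVec', dotProduct_smul]
        simp [mul_comm]
      rw [sum_mulVec', dotProduct_sum']
      simp only [this]
      apply Finset.sum_nonneg
      intro i _
      rw [dotProduct_comm (x i) v]
      exact mul_self_nonneg _
  have hΛpd : Λ.PosDef := by
    rw [hΛ, smul_one_eq_diagonal]
    exact (Matrix.PosDef.diagonal fun _ => hlam).add_posSemidef hsum
  have hinv : Λ⁻¹.PosDef := hΛpd.inv
  have hmul : ∀ v : Fin d → ℝ, Λ⁻¹ *ᵥ (Λ *ᵥ v) = v := by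
    intro v
    rw [mulVec_mulVec, Matrix.nonsing_inv_mul _ hΛpd.det_pos.ne'.isUnit, one_mulVec]
  have hmul' : ∀ v : Fin d → ℝ, Λ *ᵥ (Λ⁻¹ *ᵥ v) = v := by
    intro v
    rw [mulVec_mulVec, Matrix.mul_nonsing_inv _ hΛpd.det_pos.ne'.isUnit, one_mulVec]
  -- symmetry of the bilinear form
  have hsymm : ∀ u v : Fin d → ℝ, u ⬝ᵥ (Λ⁻¹ *ᵥ v) = v ⬝ᵥ (Λ⁻¹ *ᵥ u) := by
    intro u v
    rw [Matrix.dotProduct_mulVec, ← Matrix.mulVec_transpose]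
    have ht : Λ⁻¹ᵀ = Λ⁻¹ := by
      have := hinv.isHermitian
      rwa [Matrix.IsHermitian, conjTranspose_eq_transpose_of_trivial] at this
    rw [ht, dotProduct_comm]
  have mulVec_sum' : ∀ (w : Fin n → Fin d → ℝ), Λ⁻¹ *ᵥ (∑ i, w i) = ∑ i, Λ⁻¹ *ᵥ w i := by
    intro w
    funext j
    simp [mulVec, dotProduct, Finset.sum_apply, Finset.mul_sum]
    rw [Finset.sum_comm]
  -- decomposition
  have hΛθ : Λ *ᵥ θ = lam • θ + ∑ i, (x i ⬝ᵥ θ) • x i := by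
    rw [hΛ, add_mulVec, sum_mulVec']
    congr 1
    · rw [smul_mulVec, one_mulVec]
    · exact Finset.sum_congr rfl fun i _ => vecMulVec_mulVec' _ _ _
  have hdiff : θ - θhat = Λ⁻¹ *ᵥ (lam • θ - ∑ i, ε i • x i) := by
    have h1 : lam • θ - ∑ i, ε i • x i = Λ *ᵥ θ - ∑ i, r i • x i := by
      have h2 : (∑ i, r i • x i) = ∑ i, (x i ⬝ᵥ θ) • x i + ∑ i, ε i • x i := by
        rw [← Finset.sum_add_distrib]
        exact Finset.sum_congr rfl fun i _ => by rw [hr i, add_smul]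
      rw [hΛθ, h2]; abel
    rw [h1, mulVec_sub, hmul, hθhat]
  have hydot : y ⬝ᵥ (θ - θhat)
      = lam * (y ⬝ᵥ (Λ⁻¹ *ᵥ θ)) - ∑ i, (y ⬝ᵥ (Λ⁻¹ *ᵥ x i)) * ε i := by
    have : Λ⁻¹ *ᵥ (∑ i, ε i • x i) = ∑ i, ε i • (Λ⁻¹ *ᵥ x i) := by
      rw [mulVec_sum']
      exact Finset.sum_congr rfl fun i _ => mulVec_smul _ _ _
    rw [hdiff, mulVec_sub, this, dotProduct_sub, mulVec_smul, dotProduct_smul,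
      dotProduct_sum']
    simp [dotProduct_smul, mul_comm, smul_eq_mul]
  set p := y ⬝ᵥ (Λ⁻¹ *ᵥ y) with hp_def
  set q := θ ⬝ᵥ (Λ⁻¹ *ᵥ θ) with hq_def
  set c := y ⬝ᵥ (Λ⁻¹ *ᵥ θ) with hc_def
  have hp : 0 ≤ p := by simpa using hinv.posSemidef.dotProduct_mulVec_nonneg y
  have hq : 0 ≤ q := by simpa using hinv.posSemidef.dotProduct_mulVec_nonneg θ
  -- Cauchy-Schwarz for the Λ⁻¹ form
  have hcs : c ^ 2 ≤ p * q := by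
    by_cases hθ0 : θ = 0
    · simp [hc_def, hθ0]
      nlinarith
    · have hqpos : 0 < q := by simpa using hinv.dotProduct_mulVec_pos hθ0
      have h0 : 0 ≤ (q • y - c • θ) ⬝ᵥ (Λ⁻¹ *ᵥ (q • y - c • θ)) := by
        simpa using hinv.posSemidef.dotProduct_mulVec_nonneg (q • y - c • θ)
      have hexp : (q • y - c • θ) ⬝ᵥ (Λ⁻¹ *ᵥ (q • y - c • θ))
          = q ^ 2 * p - q * c ^ 2 := by
        have h3 : θ ⬝ᵥ (Λ⁻¹ *ᵥ y) = c := hsymm θ y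
        simp only [mulVec_sub, mulVec_smul, sub_dotProduct, dotProduct_sub,
          smul_dotProduct, dotProduct_smul, smul_eq_mul, h3, ← hp_def, ← hq_def, ← hc_def]
        ring
      rw [hexp] at h0
      nlinarith
  -- bound q ≤ d / lam
  have hqd : lam * q ≤ d := by
    obtain ⟨w, hw⟩ : ∃ w, Λ⁻¹ *ᵥ θ = w := ⟨_, rfl⟩
    have hΛw : Λ *ᵥ w = θ := by rw [← hw, hmul']
    have hq' : q = θ ⬝ᵥ w := by rw [hq_def, hw]
    have hθw : θ ⬝ᵥ w = lam * (w ⬝ᵥ w) + ∑ i, (x i ⬝ᵥ w) ^ 2 := by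
      nth_rewrite 1 [← hΛw]
      rw [hΛ, add_mulVec, sum_mulVec', add_dotProduct, smul_mulVec, one_mulVec,
        smul_dotProduct, sum_dotProduct', smul_eq_mul]
      congr 1
      refine Finset.sum_congr rfl fun i _ => ?_
      rw [vecMulVec_mulVec', smul_dotProduct, smul_eq_mul, dotProduct_comm, sq]
    have huu : 0 ≤ w ⬝ᵥ w := Finset.sum_nonneg fun i _ => mul_self_nonneg _
    have hlamu : lam * (w ⬝ᵥ w) ≤ q := by
      rw [hq', hθw]
      have : 0 ≤ ∑ i, (x i ⬝ᵥ w) ^ 2 := Finset.sum_nonneg fun i _ => sq_nonneg _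
      linarith
    have hCS2 : (θ ⬝ᵥ w) ^ 2 ≤ (θ ⬝ᵥ θ) * (w ⬝ᵥ w) := by
      simpa [dotProduct, sq] using Finset.sum_mul_sq_le_sq_mul_sq Finset.univ θ w
    have hθθ : θ ⬝ᵥ θ ≤ d := by
      have h1 : ∀ i, θ i * θ i ≤ 1 := by
        intro i
        nlinarith [hθ i, abs_nonneg (θ i), le_abs_self (θ i), neg_abs_le (θ i)]
      calc θ ⬝ᵥ θ = ∑ i, θ i * θ i := rfl
        _ ≤ ∑ _i : Fin d, (1 : ℝ) := Finset.sum_le_sum fun i _ => h1 i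
        _ = d := by simp
    rcases eq_or_lt_of_le hq with hq0 | hqpos
    · rw [← hq0, mul_zero]
      exact Nat.cast_nonneg d
    · have hθθ0 : 0 ≤ θ ⬝ᵥ θ := Finset.sum_nonneg fun i _ => mul_self_nonneg _
      rw [hq'] at hqpos ⊢
      nlinarith
  -- conclusion
  rw [hydot]
  have habs : |lam * c - ∑ i, (y ⬝ᵥ (Λ⁻¹ *ᵥ x i)) * ε i|
      ≤ lam * |c| + |∑ i, (y ⬝ᵥ (Λ⁻¹ *ᵥ x i)) * ε i| := by
    calc _ ≤ |lam * c| + |∑ i, (y ⬝ᵥ (Λ⁻¹ *ᵥ x i)) * ε i| := abs_sub _ _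
      _ = lam * |c| + _ := by rw [abs_mul, abs_of_pos hlam]
  refine habs.trans (add_le_add_left ?_ _)
  have hnn : 0 ≤ lam * |c| := by positivity
  have hX : (0:ℝ) ≤ lam * d * p :=
    mul_nonneg (mul_nonneg hlam.le (Nat.cast_nonneg d)) hp
  rw [Real.le_sqrt hnn hX]
  have hsq : (lam * |c|) ^ 2 = lam ^ 2 * c ^ 2 := by rw [mul_pow, sq_abs]
  have h4 : lam ^ 2 * c ^ 2 ≤ lam ^ 2 * (p * q) := by nlinarith [sq_nonneg lam]
  have h5 : lam * p * (lam * q) ≤ lam * p * d :=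
    mul_le_mul_of_nonneg_left hqd (mul_nonneg hlam.le hp)
  nlinarith
end
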